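/- Let ℓ ≥ 1 and v ≥ 2 be integers, and let F be the free group on generators x₁, x₂, …, x_{ℓ+2}. Let H be the subgroup generated by the elements x₁^i x₂ x₁^{-(i+1)} for 0 ≤ i ≤ v−2 together with x₃, x₄, …, x_{ℓ+2}, and let K be the subgroup generated by x₁ and x₂. Then r̄(H ∩ K) = v − 2 and r̄(H ∨ K) = ℓ + 1. -/

import Mathlib

/-!
Let `N` be the subgroup generated by the `v - 1` elements `yᵢ = x₁ⁱ x₂ x₁^{-(i+1)}`. The
endomorphism of `F` fixing `x₁, x₂` and killing the other generators is a retraction onto `K`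
that maps `H` into `N ⊆ H ∩ K`, so `H ∩ K = N`. Every generator of `F` lies in `H` or in `K`, so
`H ∨ K = F`, whose rank is `ℓ + 2` because `F` maps onto `ℤ^{ℓ+2}`.

`N` has `v - 1` generators, and no fewer suffice: the homomorphism `F → ℤ ≀ ℤ` with
`x₁ ↦ t`, `x₂ ↦ δ₀ t` sends `yᵢ` to the lamp `δᵢ`, so it maps `N` into the base group `ℤ^ℤ`
hitting `v - 1` linearly independent vectors, which the image of any generating set must span.
-/

/-- The rank of a group: the minimal cardinality of a (finite) generating set. -/
noncomputable def grank (G : Type*) [Group G] : ℕ :=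
  sInf {n : ℕ | ∃ S : Finset G, S.card = n ∧ Subgroup.closure (S : Set G) = ⊤}

/-- The reduced rank of a group: `max (0, rank - 1)` (truncated subtraction). -/
noncomputable def rbar (G : Type*) [Group G] : ℕ := grank G - 1

open Multiplicative

theorem grank_eq_rank (G : Type*) [Group G] [Group.FG G] : grank G = Group.rank G := by
  obtain ⟨S, hcard, hS⟩ := Group.rank_spec G
  refine le_antisymm (Nat.sInf_le ⟨S, hcard, hS⟩) ?_
  obtain ⟨T, hT, hT_top⟩ := Nat.sInf_mem (s := {n : ℕ | ∃ S : Finset G, S.card = n ∧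
    Subgroup.closure (S : Set G) = ⊤}) ⟨_, S, rfl, hS⟩
  exact (Group.rank_le hT_top).trans_eq hT

instance Subgroup.instGroupFGTop {G : Type*} [Group G] [Group.FG G] :
    Group.FG (⊤ : Subgroup G) :=
  Group.fg_of_surjective (f := Subgroup.topEquiv.symm.toMonoidHom) (MulEquiv.surjective _)

theorem Group.card_le_rank_of_linearIndependent {G R V ι : Type*} [Group G] [Group.FG G]
    [Ring R] [StrongRankCondition R] [AddCommGroup V] [Module R V] [Fintype ι]
    (f : G →* Multiplicative V) {w : ι → V} (hw : LinearIndependent R w)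
    (hw_mem : ∀ i, ofAdd (w i) ∈ f.range) : Fintype.card ι ≤ Group.rank G := by
  classical
  obtain ⟨S, hcard, hS⟩ := Group.rank_spec G
  set T := S.image (toAdd ∘ f)
  have hrange :
      f.range ≤ AddSubgroup.toSubgroup' (Submodule.span R (T : Set V)).toAddSubgroup := by
    rw [MonoidHom.range_eq_map, ← hS, MonoidHom.map_closure, Subgroup.closure_le]
    rintro _ ⟨g, hg, rfl⟩
    show toAdd (f g) ∈ Submodule.span R (T : Set V)
    exact Submodule.subset_span (Finset.mem_image_of_mem _ hg)
  have hw_span : Set.range w ≤ Submodule.span R (T : Set V) := by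
    rintro _ ⟨i, rfl⟩
    exact hrange (hw_mem i)
  have hT := linearIndependent_le_span' w hw (T : Set V) hw_span
  rw [Cardinal.mk_fintype, Nat.cast_le] at hT
  simp only [Finset.coe_sort_coe, Fintype.card_coe] at hT
  exact hcard ▸ hT.trans Finset.card_image_le

theorem FreeGroup.rank_eq_card (α : Type*) [Fintype α] :
    Group.rank (FreeGroup α) = Fintype.card α := by
  classical
  refine le_antisymm ?_ ?_
  · refine (Group.rank_le (S := Finset.univ.image of) ?_).trans Finset.card_image_le
    rw [Finset.coe_image, Finset.coe_univ, Set.image_univ, closure_range_of]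
  · exact Group.card_le_rank_of_linearIndependent (lift fun a => ofAdd (Pi.single a 1))
      (Pi.linearIndependent_single_one α ℤ) fun a => ⟨of a, lift_apply_of⟩

theorem Subgroup.inf_eq_of_retraction {G : Type*} [Group G] {H K N : Subgroup G} (ρ : G →* G)
    (hρK : ∀ k ∈ K, ρ k = k) (hρH : H.map ρ ≤ N) (hN : N ≤ H ⊓ K) : H ⊓ K = N :=
  le_antisymm (fun g hg => hρK g hg.2 ▸ hρH ⟨g, hg.1, rfl⟩) hN

namespace FreeGroup

open Subgroup

variable {α : Type*}

def retraction (t : Set α) [DecidablePred (· ∈ t)] : FreeGroup α →* FreeGroup α :=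
  lift fun j => if j ∈ t then of j else 1

theorem retraction_of_notMem {t : Set α} [DecidablePred (· ∈ t)] {j : α} (hj : j ∉ t) :
    retraction t (of j) = 1 := by
  simp [retraction, hj]

theorem retraction_eq_self {t : Set α} [DecidablePred (· ∈ t)] {g : FreeGroup α}
    (hg : g ∈ closure (of '' t)) : retraction t g = g :=
  MonoidHom.eqOn_closure (g := MonoidHom.id _)
    (by rintro _ ⟨j, hj, rfl⟩; simp [retraction, hj]) hg

theorem closure_union_inf_closure {s t : Set α} (hst : Disjoint s t) {T : Set (FreeGroup α)}
    (hT : T ⊆ closure (of '' t)) :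
    closure (T ∪ of '' s) ⊓ closure (of '' t) = closure T := by
  classical
  refine inf_eq_of_retraction (retraction t) (fun _ => retraction_eq_self) ?_
    (le_inf (closure_mono Set.subset_union_left) (closure_le _ |>.2 hT))
  rw [MonoidHom.map_closure, closure_le]
  rintro _ ⟨g, hg | ⟨j, hj, rfl⟩, rfl⟩
  · rw [SetLike.mem_coe, retraction_eq_self (hT hg)]
    exact subset_closure hg
  · rw [SetLike.mem_coe, retraction_of_notMem (hst.notMem_of_mem_left hj)]
    exact one_mem _

theorem closure_union_sup_closure_eq_top {s t : Set α} (hst : s ∪ t = Set.univ)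
    (T : Set (FreeGroup α)) : closure (T ∪ of '' s) ⊔ closure (of '' t) = ⊤ := by
  rw [eq_top_iff, ← closure_range_of, ← Set.image_univ, ← hst, Set.image_union,
    Subgroup.closure_union]
  exact sup_le_sup_right (Subgroup.closure_mono Set.subset_union_right) _

end FreeGroup

section ConjGens

variable {G : Type*} [Group G] [DecidableEq G]

def conjGens (x y : G) (m : ℕ) : Finset G :=
  (Finset.range (m + 1)).image fun i : ℕ => x ^ (i : ℤ) * y * x ^ (-((i : ℤ) + 1))

theorem coe_conjGens (x y : G) (m : ℕ) : (conjGens x y m : Set G) =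
    {g | ∃ i : ℕ, i ≤ m ∧ g = x ^ (i : ℤ) * y * x ^ (-((i : ℤ) + 1))} := by
  ext
  simp [conjGens, eq_comm]

theorem conjGens_subset {x y : G} {K : Subgroup G} (hx : x ∈ K) (hy : y ∈ K) (m : ℕ) :
    (conjGens x y m : Set G) ⊆ K := by
  intro g hg
  obtain ⟨i, -, rfl⟩ := Finset.mem_image.1 hg
  exact mul_mem (mul_mem (zpow_mem hx _) hy) (zpow_mem hx _)

theorem rank_closure_conjGens_le (x y : G) (m : ℕ) :
    Group.rank (Subgroup.closure (conjGens x y m : Set G)) ≤ m + 1 :=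
  (Subgroup.rank_closure_finset_le_card _).trans
    (Finset.card_image_le.trans_eq (Finset.card_range _))

end ConjGens

def translateAut {A M : Type*} [AddCommGroup A] [Add M] :
    Multiplicative A →* MulAut (Multiplicative (A → M)) where
  toFun a :=
    { toFun := fun f => ofAdd fun x => toAdd f (x - toAdd a)
      invFun := fun f => ofAdd fun x => toAdd f (x + toAdd a)
      left_inv := fun f => by simp
      right_inv := fun f => by simp
      map_mul' := fun _ _ => rfl }
  map_one' := by ext; simp
  map_mul' a b := by ext f x; simp [sub_sub]

theorem translateAut_single {A M : Type*} [AddCommGroup A] [DecidableEq A] [Add M] [Zero M]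
    (a b : A) (m : M) :
    translateAut (ofAdd a) (ofAdd (Pi.single b m)) = ofAdd (Pi.single (b + a) m) := by
  ext x
  simp [translateAut, Pi.single_apply, sub_eq_iff_eq_add]

/-- The unrestricted wreath product `ℤ ≀ ℤ`. -/
abbrev IntWreathInt := Multiplicative (ℤ → ℤ) ⋊[translateAut] Multiplicative ℤ

namespace IntWreathInt

open SemidirectProduct

def shift : IntWreathInt := inr (ofAdd 1)

def lamp (n : ℤ) : IntWreathInt := inl (ofAdd (Pi.single n 1))

theorem shift_zpow (n : ℤ) : shift ^ n = inr (ofAdd n) := by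
  rw [shift, ← map_zpow, ← ofAdd_zsmul, smul_eq_mul, mul_one]

theorem shift_zpow_mul_lamp_zero_mul_shift_zpow_neg (n : ℤ) :
    shift ^ n * lamp 0 * shift ^ (-n) = lamp n := by
  rw [zpow_neg, shift_zpow, ← map_inv, lamp, lamp, ← inl_aut, translateAut_single, zero_add]

end IntWreathInt

namespace FreeGroup

open IntWreathInt SemidirectProduct

variable {α : Type*} [DecidableEq α]

def toIntWreathInt (a b : α) : FreeGroup α →* IntWreathInt :=
  lift fun j => if j = a then shift else if j = b then lamp 0 * shift else 1

theorem toIntWreathInt_conj {a b : α} (hab : a ≠ b) (n : ℤ) :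
    toIntWreathInt a b (of a ^ n * of b * of a ^ (-(n + 1))) = lamp n := by
  simp only [toIntWreathInt, _root_.map_mul, _root_.map_zpow, lift_apply_of, hab.symm,
    ↓reduceIte]
  rw [← shift_zpow_mul_lamp_zero_mul_shift_zpow_neg n]
  group

theorem rank_closure_conjGens {a b : α} (hab : a ≠ b) (m : ℕ) :
    Group.rank (Subgroup.closure (conjGens (of a) (of b) m : Set (FreeGroup α))) = m + 1 := by
  set N := Subgroup.closure (conjGens (of a) (of b) m : Set (FreeGroup α))
  have hmem (i : Fin (m + 1)) : of a ^ (i : ℤ) * of b * of a ^ (-((i : ℤ) + 1)) ∈ N :=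
    Subgroup.subset_closure (Finset.mem_image_of_mem _ (Finset.mem_range.2 i.2))
  have hlamps : N.map (toIntWreathInt a b) ≤ (inl : _ →* IntWreathInt).range := by
    rw [MonoidHom.map_closure, Subgroup.closure_le]
    rintro _ ⟨g, hg, rfl⟩
    obtain ⟨i, -, rfl⟩ := Finset.mem_image.1 hg
    exact ⟨_, (toIntWreathInt_conj hab i).symm⟩
  let lamps : N →* Multiplicative (ℤ → ℤ) :=
    (MonoidHom.ofInjective inl_injective).symm.toMonoidHom.comp
      (((toIntWreathInt a b).comp N.subtype).codRestrict _ fun g => hlamps ⟨g, g.2, rfl⟩)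
  have hw : LinearIndependent ℤ fun i : Fin (m + 1) => (Pi.single (i : ℤ) 1 : ℤ → ℤ) :=
    (Pi.linearIndependent_single_one ℤ ℤ).comp _ fun i j h => Fin.ext (by exact_mod_cast h)
  refine le_antisymm (rank_closure_conjGens_le _ _ _) ?_
  simpa using Group.card_le_rank_of_linearIndependent lamps hw fun i =>
    ⟨⟨_, hmem i⟩, by
      rw [MonoidHom.comp_apply, MulEquiv.coe_toMonoidHom, MulEquiv.symm_apply_eq]
      exact Subtype.ext (toIntWreathInt_conj hab i)⟩

end FreeGroup

/-- With `H = ⟨x₁ⁱx₂x₁^{-(i+1)} (0 ≤ i ≤ v-2), x₃, …, x_{ℓ+2}⟩` and `K = ⟨x₁, x₂⟩`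
in the free group on `x₁, …, x_{ℓ+2}`, we have `r̄(H ∩ K) = v - 2` and
`r̄(H ∨ K) = ℓ + 1`. -/
theorem rbar_inf_and_sup (ℓ v : ℕ)
    (x₁ x₂ : FreeGroup (Fin (ℓ + 2)))
    (hx₁ : x₁ = FreeGroup.of ⟨0, by omega⟩)
    (hx₂ : x₂ = FreeGroup.of ⟨1, by omega⟩)
    (H K : Subgroup (FreeGroup (Fin (ℓ + 2))))
    (hH : H = Subgroup.closure
      ({g | ∃ i : ℕ, i ≤ v - 2 ∧ g = x₁ ^ (i : ℤ) * x₂ * x₁ ^ (-((i : ℤ) + 1))} ∪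
       {g | ∃ j : Fin (ℓ + 2), 2 ≤ (j : ℕ) ∧ g = FreeGroup.of j}))
    (hK : K = Subgroup.closure {x₁, x₂}) :
    rbar ↥(H ⊓ K) = v - 2 ∧ rbar ↥(H ⊔ K) = ℓ + 1 := by
  set t : Set (Fin (ℓ + 2)) := {⟨0, by omega⟩, ⟨1, by omega⟩}
  have hH' : H = Subgroup.closure (conjGens x₁ x₂ (v - 2) ∪ FreeGroup.of '' tᶜ) := by
    rw [hH, coe_conjGens]
    congr
    ext g
    simp only [t, Set.mem_compl_iff, Set.mem_insert_iff, Set.mem_singleton_iff, Fin.ext_iff]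
    exact exists_congr fun j => and_congr (by omega) eq_comm
  have hK' : K = Subgroup.closure (FreeGroup.of '' t) := by rw [hK, Set.image_pair, hx₁, hx₂]
  have hT : (conjGens x₁ x₂ (v - 2) : Set (FreeGroup (Fin (ℓ + 2)))) ⊆ K :=
    conjGens_subset (hK ▸ Subgroup.subset_closure (by simp))
      (hK ▸ Subgroup.subset_closure (by simp)) _
  rw [hH', hK', FreeGroup.closure_union_inf_closure disjoint_compl_left (hK' ▸ hT),
    FreeGroup.closure_union_sup_closure_eq_top (Set.compl_union_self t), rbar, rbar,
    grank_eq_rank, grank_eq_rank, Group.rank_congr Subgroup.topEquiv, FreeGroup.rank_eq_card,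
    Fintype.card_fin, hx₁, hx₂, FreeGroup.rank_closure_conjGens (by simp)]
  omega
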